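/- For every ε > 0 there exist an open set S ⊂ (0,1) with Lebesgue measure L¹(S) < ε which is dense in (0,1), and a Lipschitz horizontal curve γ: [0,1] → ℝ⁴ in the Engel group such that: (1) γ'(t) = (0,1,0,0) for almost every t ∈ (0,1) ∖ S; and (2) the fourth component γ₄ is strictly decreasing on (0,1) ∖ S, i.e. if a, b ∈ (0,1) ∖ S and a < b then γ₄(b) < γ₄(a). -/

import Mathlib

open MeasureTheory Set

/-- A vector `u` is horizontal at the point `ζ` in the Engel group. -/
def EngelHoriz (ζ u : EuclideanSpace ℝ (Fin 4)) : Prop :=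
  u 2 = u 1 * ζ 0 ∧ u 3 = u 1 * (ζ 0) ^ 2 / 2

/-- The vector `(0,1,0,0)` in ℝ⁴. -/
def e₂ : EuclideanSpace ℝ (Fin 4) := WithLp.toLp 2 (fun i => if i = 1 then 1 else 0)

/-!
Take a dense open set `S ⊆ (0,1)` of small measure, a small neighbourhood of the rationals, and let
the curve move with velocity `e₂` off `S`. On each component `(P, P + L)` of `S` it runs instead
through a rescaled copy of one model path: over `[0,1]`, spending time `1/6` on each leg, the planar
path `(loopX, loopY)` goes right to `(1,0)`, down to `(1,-1)`, left to `(-1,-1)`, down to `(-1,-2)`,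
right to `(0,-2)` and up to `(0,1)`, so it ends where the straight path would. Its horizontal lift
ends at height `0` in the third coordinate but `-1` in the fourth, since `x₄' = x₂' x₁² / 2` is `-3`
on the two downward legs and `0` elsewhere. Scaled by `L` in `x₁, x₂`, by `L²` in `x₃` and by `L³`
in `x₄`, the copies stay horizontal and uniformly Lipschitz, and their deviation from the straight
path vanishes at the ends of the components, so they fit together. The fourth coordinate never
increases and drops across every component, hence strictly between any two points of `(0,1) ∖ S`.
At a Lebesgue density point `t` of the complement of `S` the deviation is
`O(|S ∩ [t, u]|) = o(|u - t|)`, so the derivative there is `e₂`.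
-/

open Filter Topology Metric
open scoped NNReal

lemma LipschitzWith.const_mul {f : ℝ → ℝ} {K : ℝ≥0} (hf : LipschitzWith K f) (m : ℝ) :
    LipschitzWith (‖m‖₊ * K) fun s => m * f s :=
  (lipschitzWith_smul m).comp hf

namespace BadEngel

noncomputable section

def ramp (a b s : ℝ) : ℝ := min (max s a) b - a

lemma lipschitzWith_ramp (a b : ℝ) : LipschitzWith 1 (ramp a b) := by
  unfold ramp
  simpa using ((LipschitzWith.id.max_const a).min_const b).sub (LipschitzWith.const a)

lemma ramp_of_le {a b s : ℝ} (hs : s ≤ a) (hab : a ≤ b) : ramp a b s = 0 := by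
  simp [ramp, max_eq_right hs, min_eq_left hab]

lemma ramp_of_ge {a b s : ℝ} (hs : b ≤ s) (hab : a ≤ b) : ramp a b s = b - a := by
  simp [ramp, max_eq_left (hab.trans hs), min_eq_right hs]

lemma ramp_eventuallyEq {a b s : ℝ} (ha : s ≠ a) (hb : s ≠ b) :
    (ramp a b =ᶠ[𝓝 s] fun u => ramp a b s + (Icc a b).indicator 1 s * (u - s)) ∧
      (Icc a b).indicator (1 : ℝ → ℝ) =ᶠ[𝓝 s] fun _ => (Icc a b).indicator 1 s := by
  rcases lt_or_gt_of_ne ha with hsa | has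
  · have hs : s ∉ Icc a b := fun h => hsa.not_ge h.1
    refine ⟨?_, ?_⟩ <;> filter_upwards [Iio_mem_nhds hsa] with u hu <;> rw [mem_Iio] at hu
    · simp [ramp, indicator_of_notMem hs, max_eq_right hu.le, max_eq_right hsa.le]
    · simp [indicator_of_notMem hs, indicator_of_notMem fun h : u ∈ Icc a b => hu.not_ge h.1]
  rcases lt_or_gt_of_ne hb with hsb | hbs
  · have hs : s ∈ Icc a b := ⟨has.le, hsb.le⟩
    refine ⟨?_, ?_⟩ <;> filter_upwards [Ioo_mem_nhds has hsb] with u hu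
    · simp [ramp, indicator_of_mem hs, max_eq_left hu.1.le, min_eq_left hu.2.le,
        max_eq_left has.le, min_eq_left hsb.le]
    · simp [indicator_of_mem hs, indicator_of_mem (Ioo_subset_Icc_self hu)]
  · have hs : s ∉ Icc a b := fun h => hbs.not_ge h.2
    refine ⟨?_, ?_⟩ <;> filter_upwards [Ioi_mem_nhds hbs] with u hu <;> rw [mem_Ioi] at hu
    · simp [ramp, indicator_of_notMem hs, min_eq_right (hu.le.trans (le_max_left u a)),
        min_eq_right (hbs.le.trans (le_max_left s a))]
    · simp [indicator_of_notMem hs, indicator_of_notMem fun h : u ∈ Icc a b => hu.not_ge h.2]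

lemma hasDerivAt_ramp {a b s : ℝ} (ha : s ≠ a) (hb : s ≠ b) :
    HasDerivAt (ramp a b) ((Icc a b).indicator 1 s) s := by
  have h : HasDerivAt (fun u => ramp a b s + (Icc a b).indicator 1 s * (u - s))
      ((Icc a b).indicator 1 s) s := by
    simpa using ((hasDerivAt_id s).sub_const s).const_mul ((Icc a b).indicator (1 : ℝ → ℝ) s)
      |>.const_add (ramp a b s)
  exact h.congr_of_eventuallyEq (ramp_eventuallyEq ha hb).1

lemma continuousAt_indicator_Icc {a b s : ℝ} (ha : s ≠ a) (hb : s ≠ b) :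
    ContinuousAt ((Icc a b).indicator (1 : ℝ → ℝ)) s :=
  continuousAt_const.congr (ramp_eventuallyEq ha hb).2.symm

lemma indicator_one_mul_eq_of_eqOn {I : Set ℝ} {f : ℝ → ℝ} {c : ℝ}
    (h : EqOn f (fun _ => c) I) (s : ℝ) : I.indicator 1 s * f s = c * I.indicator 1 s := by
  by_cases hs : s ∈ I
  · simp [hs, h hs]
  · simp [hs]

def loopX (s : ℝ) : ℝ :=
  6 * ramp 0 (1 / 6) s - 12 * ramp (1 / 3) (1 / 2) s + 6 * ramp (2 / 3) (5 / 6) s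
def loopY (s : ℝ) : ℝ :=
  -6 * ramp (1 / 6) (1 / 3) s - 6 * ramp (1 / 2) (2 / 3) s + 18 * ramp (5 / 6) 1 s
def loopZ (s : ℝ) : ℝ := -6 * ramp (1 / 6) (1 / 3) s + 6 * ramp (1 / 2) (2 / 3) s

def loopVelX (s : ℝ) : ℝ :=
  6 * (Icc 0 (1 / 6)).indicator 1 s - 12 * (Icc (1 / 3) (1 / 2)).indicator 1 s +
    6 * (Icc (2 / 3) (5 / 6)).indicator 1 s
def loopVelY (s : ℝ) : ℝ :=
  -6 * (Icc (1 / 6) (1 / 3)).indicator 1 s - 6 * (Icc (1 / 2) (2 / 3)).indicator 1 s +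
    18 * (Icc (5 / 6) 1).indicator 1 s
def loopVelW (s : ℝ) : ℝ :=
  -3 * ((Icc (1 / 6) (1 / 3)).indicator 1 s + (Icc (1 / 2) (2 / 3)).indicator 1 s)

def loopBreaks : Set ℝ := {0, 1 / 6, 1 / 3, 1 / 2, 2 / 3, 5 / 6, 1}

lemma lipschitzWith_loopX : LipschitzWith 24 loopX := by
  have h := (((lipschitzWith_ramp 0 (1 / 6)).const_mul 6).sub
    ((lipschitzWith_ramp (1 / 3) (1 / 2)).const_mul 12)).add
    ((lipschitzWith_ramp (2 / 3) (5 / 6)).const_mul 6)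
  exact h.weaken (by norm_num)

lemma lipschitzWith_loopY_sub_id : LipschitzWith 31 fun s => loopY s - s := by
  have h := ((((lipschitzWith_ramp (1 / 6) (1 / 3)).const_mul (-6)).sub
    ((lipschitzWith_ramp (1 / 2) (2 / 3)).const_mul 6)).add
    ((lipschitzWith_ramp (5 / 6) 1).const_mul 18)).sub LipschitzWith.id
  exact h.weaken (by norm_num)

lemma lipschitzWith_loopZ : LipschitzWith 12 loopZ := by
  have h := ((lipschitzWith_ramp (1 / 6) (1 / 3)).const_mul (-6)).add
    ((lipschitzWith_ramp (1 / 2) (2 / 3)).const_mul 6)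
  exact h.weaken (by norm_num)

lemma loopX_zero : loopX 0 = 0 := by norm_num [loopX, ramp]
lemma loopX_one : loopX 1 = 0 := by norm_num [loopX, ramp]
lemma loopY_zero : loopY 0 = 0 := by norm_num [loopY, ramp]
lemma loopY_one : loopY 1 = 1 := by norm_num [loopY, ramp]
lemma loopZ_zero : loopZ 0 = 0 := by norm_num [loopZ, ramp]
lemma loopZ_one : loopZ 1 = 0 := by norm_num [loopZ, ramp]

lemma loopX_eqOn_one : EqOn loopX (fun _ => 1) (Icc (1 / 6) (1 / 3)) :=
  fun s hs => by
    rw [loopX, ramp_of_ge (by linarith [hs.1]) (by norm_num),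
      ramp_of_le (by linarith [hs.2]) (by norm_num), ramp_of_le (by linarith [hs.2]) (by norm_num)]
    norm_num

lemma loopX_eqOn_neg_one : EqOn loopX (fun _ => -1) (Icc (1 / 2) (2 / 3)) :=
  fun s hs => by
    rw [loopX, ramp_of_ge (by linarith [hs.1]) (by norm_num),
      ramp_of_ge (by linarith [hs.1]) (by norm_num), ramp_of_le (by linarith [hs.2]) (by norm_num)]
    norm_num

lemma loopX_eqOn_zero : EqOn loopX (fun _ => 0) (Icc (5 / 6) 1) :=
  fun s hs => by
    rw [loopX, ramp_of_ge (by linarith [hs.1]) (by norm_num),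
      ramp_of_ge (by linarith [hs.1]) (by norm_num), ramp_of_ge (by linarith [hs.1]) (by norm_num)]
    norm_num

lemma loopVelY_mul_loopX (s : ℝ) :
    loopVelY s * loopX s =
      -6 * (Icc (1 / 6) (1 / 3)).indicator 1 s + 6 * (Icc (1 / 2) (2 / 3)).indicator 1 s := by
  have h₁ := indicator_one_mul_eq_of_eqOn loopX_eqOn_one s
  have h₃ := indicator_one_mul_eq_of_eqOn loopX_eqOn_neg_one s
  have h₅ := indicator_one_mul_eq_of_eqOn loopX_eqOn_zero s
  rw [loopVelY]
  linear_combination -6 * h₁ - 6 * h₃ + 18 * h₅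

lemma loopVelY_mul_loopX_sq (s : ℝ) : loopVelY s * loopX s ^ 2 / 2 = loopVelW s := by
  have h₁ := indicator_one_mul_eq_of_eqOn loopX_eqOn_one s
  have h₃ := indicator_one_mul_eq_of_eqOn loopX_eqOn_neg_one s
  rw [loopVelW]
  linear_combination loopX s / 2 * loopVelY_mul_loopX s - 3 * h₁ + 3 * h₃

lemma hasDerivAt_loop {s : ℝ} (hs : s ∉ loopBreaks) :
    HasDerivAt loopX (loopVelX s) s ∧ HasDerivAt loopY (loopVelY s) s ∧
      HasDerivAt loopZ (loopVelY s * loopX s) s ∧ ContinuousAt loopVelW s := by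
  simp only [loopBreaks, mem_insert_iff, mem_singleton_iff, not_or] at hs
  obtain ⟨h₀, h₁, h₂, h₃, h₄, h₅, h₆⟩ := hs
  refine ⟨?_, ?_, ?_, ?_⟩
  · exact (((hasDerivAt_ramp h₀ h₁).const_mul 6).sub ((hasDerivAt_ramp h₂ h₃).const_mul 12)).add
      ((hasDerivAt_ramp h₄ h₅).const_mul 6)
  · exact (((hasDerivAt_ramp h₁ h₂).const_mul (-6)).sub
      ((hasDerivAt_ramp h₃ h₄).const_mul 6)).add ((hasDerivAt_ramp h₅ h₆).const_mul 18)
  · rw [loopVelY_mul_loopX]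
    exact ((hasDerivAt_ramp h₁ h₂).const_mul (-6)).add ((hasDerivAt_ramp h₃ h₄).const_mul 6)
  · exact ((continuousAt_indicator_Icc h₁ h₂).add (continuousAt_indicator_Icc h₃ h₄)).const_mul _

lemma loopVelW_nonpos (s : ℝ) : loopVelW s ≤ 0 := by
  simp only [loopVelW, indicator_apply, Pi.one_apply]
  split_ifs <;> norm_num

lemma abs_loopVelW_le (s : ℝ) : |loopVelW s| ≤ 6 := by
  simp only [loopVelW, indicator_apply, Pi.one_apply]
  split_ifs <;> norm_num

lemma loopVelW_eqOn : EqOn loopVelW (fun _ => -3) (Icc (1 / 6) (1 / 3)) := fun s hs => by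
  have h : s ∉ Icc (1 / 2 : ℝ) (2 / 3) := fun h => by linarith [hs.2, h.1]
  rw [loopVelW, indicator_of_mem hs, indicator_of_notMem h]
  norm_num

lemma measurable_loopVelW : Measurable loopVelW :=
  ((measurable_one.indicator measurableSet_Icc).add
    (measurable_one.indicator measurableSet_Icc)).const_mul _

/-- For `S` open and bounded and `t ∈ S`, `Ioo (leftEnd S t) (rightEnd S t)` is the component of `S`
containing `t`; for `t ∉ S` both ends are `t`. -/
def leftEnd (S : Set ℝ) (t : ℝ) : ℝ := sSup (Sᶜ ∩ Iic t)
def rightEnd (S : Set ℝ) (t : ℝ) : ℝ := sInf (Sᶜ ∩ Ici t)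
def compLength (S : Set ℝ) (t : ℝ) : ℝ := rightEnd S t - leftEnd S t
def relPos (S : Set ℝ) (t : ℝ) : ℝ := (t - leftEnd S t) / compLength S t

section Components

variable {S : Set ℝ} {t u z : ℝ}

lemma le_leftEnd (hz : z ∉ S) (hzt : z ≤ t) : z ≤ leftEnd S t :=
  le_csSup ⟨t, fun _ hx => hx.2⟩ ⟨hz, hzt⟩

lemma rightEnd_le (hz : z ∉ S) (htz : t ≤ z) : rightEnd S t ≤ z :=
  csInf_le ⟨t, fun _ hx => hx.2⟩ ⟨hz, htz⟩

lemma Ioo_leftEnd_rightEnd_subset (t : ℝ) : Ioo (leftEnd S t) (rightEnd S t) ⊆ S := by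
  intro u ⟨hlu, hur⟩
  by_contra hu
  rcases le_total u t with hut | htu
  · exact (le_leftEnd hu hut).not_gt hlu
  · exact (rightEnd_le hu htu).not_gt hur

variable (hS : S ⊆ Ioo 0 1)
include hS

lemma nonempty_compl_inter_Iic (t : ℝ) : (Sᶜ ∩ Iic t).Nonempty :=
  ⟨min t 0, fun h => (hS h).1.not_ge (min_le_right t 0), min_le_left t 0⟩

lemma nonempty_compl_inter_Ici (t : ℝ) : (Sᶜ ∩ Ici t).Nonempty :=
  ⟨max t 1, fun h => (hS h).2.not_ge (le_max_right t 1), le_max_left t 1⟩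

lemma leftEnd_le (t : ℝ) : leftEnd S t ≤ t :=
  csSup_le (nonempty_compl_inter_Iic hS t) fun _ hx => hx.2

lemma le_rightEnd (t : ℝ) : t ≤ rightEnd S t :=
  le_csInf (nonempty_compl_inter_Ici hS t) fun _ hx => hx.2

lemma monotone_leftEnd : Monotone (leftEnd S) := fun _ y hxy =>
  csSup_le_csSup ⟨y, fun _ hx => hx.2⟩ (nonempty_compl_inter_Iic hS _)
    (inter_subset_inter_right _ (Iic_subset_Iic.2 hxy))

lemma monotone_rightEnd : Monotone (rightEnd S) := fun _ _ hxy =>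
  le_csInf (nonempty_compl_inter_Ici hS _) fun _ hz => rightEnd_le hz.1 (hxy.trans hz.2)

lemma measurable_relPos : Measurable (relPos S) :=
  (measurable_id.sub (monotone_leftEnd hS).measurable).div
    ((monotone_rightEnd hS).measurable.sub (monotone_leftEnd hS).measurable)

lemma compLength_le_one (ht : t ∈ S) : compLength S t ≤ 1 := by
  have h₀ : 0 ≤ leftEnd S t := le_leftEnd (fun h => (hS h).1.false) (hS ht).1.le
  have h₁ : rightEnd S t ≤ 1 := rightEnd_le (fun h => (hS h).2.false) (hS ht).2.le
  rw [compLength]; linarith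

variable (hSo : IsOpen S)
include hSo

lemma leftEnd_notMem (t : ℝ) : leftEnd S t ∉ S :=
  ((hSo.isClosed_compl.inter isClosed_Iic).csSup_mem (nonempty_compl_inter_Iic hS t)
    ⟨t, fun _ hx => hx.2⟩).1

lemma rightEnd_notMem (t : ℝ) : rightEnd S t ∉ S :=
  ((hSo.isClosed_compl.inter isClosed_Ici).csInf_mem (nonempty_compl_inter_Ici hS t)
    ⟨t, fun _ hx => hx.2⟩).1

lemma leftEnd_lt (ht : t ∈ S) : leftEnd S t < t :=
  (leftEnd_le hS t).lt_of_ne fun h => leftEnd_notMem hS hSo t (by rwa [h])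

lemma lt_rightEnd (ht : t ∈ S) : t < rightEnd S t :=
  (le_rightEnd hS t).lt_of_ne fun h => rightEnd_notMem hS hSo t (by rwa [← h])

lemma compLength_pos (ht : t ∈ S) : 0 < compLength S t :=
  sub_pos.2 ((leftEnd_lt hS hSo ht).trans (lt_rightEnd hS hSo ht))

lemma leftEnd_eq_of_mem_Ioo (hu : u ∈ Ioo (leftEnd S t) (rightEnd S t)) :
    leftEnd S u = leftEnd S t := by
  refine le_antisymm (csSup_le (nonempty_compl_inter_Iic hS u) fun x hx => ?_)
    (le_leftEnd (leftEnd_notMem hS hSo t) hu.1.le)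
  by_contra hxt
  exact hx.1 (Ioo_leftEnd_rightEnd_subset t ⟨not_le.1 hxt, hx.2.trans_lt hu.2⟩)

lemma rightEnd_eq_of_mem_Ioo (hu : u ∈ Ioo (leftEnd S t) (rightEnd S t)) :
    rightEnd S u = rightEnd S t := by
  refine le_antisymm (rightEnd_le (rightEnd_notMem hS hSo t) hu.2.le)
    (le_csInf (nonempty_compl_inter_Ici hS u) fun x hx => ?_)
  by_contra hxt
  exact hx.1 (Ioo_leftEnd_rightEnd_subset t ⟨hu.1.trans_le hx.2, not_le.1 hxt⟩)

lemma relPos_mem_Ioo (ht : t ∈ S) : relPos S t ∈ Ioo 0 1 := by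
  have hL := compLength_pos hS hSo ht
  refine ⟨div_pos (sub_pos.2 (leftEnd_lt hS hSo ht)) hL, (div_lt_one hL).2 ?_⟩
  rw [compLength]; linarith [lt_rightEnd hS hSo ht]

end Components

def DensityZeroAt (S : Set ℝ) (t : ℝ) : Prop :=
  Tendsto (fun r => volume (S ∩ closedBall t r) / volume (closedBall t r)) (𝓝[>] 0) (𝓝 0)

section Density

variable {E : Type*} [NormedAddCommGroup E] [NormedSpace ℝ E] {S : Set ℝ} {t : ℝ}

lemma sub_le_measureReal_of_Ioo_subset {T : Set ℝ} {a b : ℝ} (hT : volume T ≠ ⊤)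
    (h : Ioo a b ⊆ T) (hab : a ≤ b) : b - a ≤ volume.real T := by
  rw [← Real.volume_real_Ioo_of_le hab]
  exact measureReal_mono h hT

lemma measureReal_inter_uIcc_le (S : Set ℝ) (t u : ℝ) : volume.real (S ∩ uIcc t u) ≤ |u - t| := by
  rw [← Real.volume_real_interval]
  exact measureReal_mono inter_subset_right isCompact_uIcc.measure_lt_top.ne

lemma norm_intervalIntegral_le_measureReal (hS : MeasurableSet S) {f : ℝ → E} {C : ℝ}
    (hf : ∀ x, ‖f x‖ ≤ C) (hfS : ∀ x ∉ S, f x = 0) (t u : ℝ) :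
    ‖∫ x in t..u, f x‖ ≤ C * volume.real (S ∩ uIcc t u) := by
  have hC : 0 ≤ C := (norm_nonneg _).trans (hf 0)
  have hfS' : S.indicator f = f := indicator_eq_self.2 fun x hx => by_contra fun h => hx (hfS x h)
  rw [intervalIntegral.norm_integral_eq_norm_integral_uIoc, ← hfS', setIntegral_indicator hS]
  calc ‖∫ x in uIoc t u ∩ S, f x‖ ≤ C * volume.real (uIoc t u ∩ S) :=
        norm_setIntegral_le_of_norm_le_const
          (measure_lt_top_of_subset inter_subset_left measure_Ioc_lt_top.ne) fun x _ => hf x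
    _ ≤ C * volume.real (S ∩ uIcc t u) := by
        rw [inter_comm]
        exact mul_le_mul_of_nonneg_left (measureReal_mono (inter_subset_inter_right _
          uIoc_subset_uIcc) (measure_ne_top_of_subset inter_subset_right
            isCompact_uIcc.measure_lt_top.ne)) hC

lemma isLittleO_measureReal_inter_uIcc
    (hd : DensityZeroAt S t) :
    (fun u => volume.real (S ∩ uIcc t u)) =o[𝓝 t] fun u => u - t := by
  refine Asymptotics.isLittleO_iff.2 fun c hc => ?_
  obtain ⟨δ, hδ, hsub⟩ := mem_nhdsGT_iff_exists_Ioo_subset.1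
    (hd.eventually (gt_mem_nhds (ENNReal.ofReal_pos.2 (half_pos hc))))
  filter_upwards [ball_mem_nhds t (mem_Ioi.1 hδ)] with u hu
  rw [Real.norm_of_nonneg measureReal_nonneg, Real.norm_eq_abs]
  rcases eq_or_ne u t with rfl | hut
  · simpa using measureReal_inter_uIcc_le S u u
  have hr : 0 < |u - t| := abs_pos.2 (sub_ne_zero.2 hut)
  have hball : volume (S ∩ closedBall t |u - t|) ≤ ENNReal.ofReal (c * |u - t|) := by
    have h : volume (S ∩ closedBall t |u - t|) / volume (closedBall t |u - t|) <
        ENNReal.ofReal (c / 2) := hsub ⟨hr, by rwa [Metric.mem_ball, Real.dist_eq] at hu⟩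
    rw [Real.volume_closedBall, ENNReal.div_lt_iff
      (Or.inl (ENNReal.ofReal_pos.2 (by positivity)).ne') (Or.inl ENNReal.ofReal_ne_top),
      ← ENNReal.ofReal_mul (half_pos hc).le] at h
    exact h.le.trans_eq (by ring_nf)
  have huIcc : uIcc t u ⊆ closedBall t |u - t| := by
    rw [Real.closedBall_eq_Icc]
    exact uIcc_subset_Icc ⟨by linarith [abs_nonneg (u - t)], by linarith [abs_nonneg (u - t)]⟩
      ⟨by linarith [neg_abs_le (u - t)], by linarith [le_abs_self (u - t)]⟩
  calc volume.real (S ∩ uIcc t u) ≤ volume.real (S ∩ closedBall t |u - t|) :=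
        measureReal_mono (inter_subset_inter_right _ huIcc)
          (measure_ne_top_of_subset inter_subset_right measure_closedBall_lt_top.ne)
    _ ≤ c * |u - t| := ENNReal.toReal_le_of_le_ofReal (by positivity) hball

lemma hasDerivAt_of_norm_sub_le_measureReal {f : ℝ → E} {v : E} {C : ℝ}
    (hd : DensityZeroAt S t)
    (hf : ∀ u, ‖f u - f t - (u - t) • v‖ ≤ C * volume.real (S ∩ uIcc t u)) :
    HasDerivAt f v t := by
  refine hasDerivAt_iff_isLittleO.2 ((Asymptotics.IsBigO.of_bound C
    (Eventually.of_forall fun u => ?_)).trans_isLittleO (isLittleO_measureReal_inter_uIcc hd))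
  rw [Real.norm_of_nonneg measureReal_nonneg]
  exact hf u

end Density

open Classical in
def onComponents (S : Set ℝ) (k : ℕ) (ρ : ℝ → ℝ) (t : ℝ) : ℝ :=
  if t ∈ S then compLength S t ^ k * ρ (relPos S t) else 0

section OnComponents

variable {S : Set ℝ} {k : ℕ} {ρ : ℝ → ℝ} {t u z : ℝ}

lemma onComponents_of_notMem (ht : t ∉ S) : onComponents S k ρ t = 0 := if_neg ht

variable (hS : S ⊆ Ioo 0 1) (hSo : IsOpen S)
include hS hSo

lemma onComponents_of_mem_Ioo (hu : u ∈ Ioo (leftEnd S t) (rightEnd S t)) :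
    onComponents S k ρ u = compLength S t ^ k * ρ ((u - leftEnd S t) / compLength S t) := by
  rw [onComponents, if_pos (Ioo_leftEnd_rightEnd_subset t hu), relPos, compLength, compLength,
    leftEnd_eq_of_mem_Ioo hS hSo hu, rightEnd_eq_of_mem_Ioo hS hSo hu]

lemma abs_onComponents_le_measureReal {K : ℝ≥0} (hρ : LipschitzWith K ρ) (hρ₀ : ρ 0 = 0)
    (hρ₁ : ρ 1 = 0) (hk : k ≠ 0) (hz : z ∉ S) (u : ℝ) :
    |onComponents S k ρ u| ≤ K * volume.real (S ∩ uIcc z u) := by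
  by_cases hu : u ∈ S
  swap
  · rw [onComponents_of_notMem hu, abs_zero]; positivity
  set L := compLength S u
  set s := relPos S u
  have hL := compLength_pos hS hSo hu
  have hfin : volume (S ∩ uIcc z u) ≠ ⊤ :=
    measure_ne_top_of_subset inter_subset_right isCompact_uIcc.measure_lt_top.ne
  have hLs : L * s = u - leftEnd S u := by simp only [L, s, relPos]; field_simp
  have hLk : L ^ k ≤ L := pow_le_of_le_one hL.le (compLength_le_one hS hu) hk
  have hbound : |onComponents S k ρ u| ≤ L * |ρ s| := by
    rw [onComponents, if_pos hu, abs_mul, abs_of_pos (pow_pos hL k)]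
    exact mul_le_mul_of_nonneg_right hLk (abs_nonneg _)
  have hs := relPos_mem_Ioo hS hSo hu
  rcases le_total z u with hzu | huz
  · have hρs : |ρ s| ≤ K * s := by
      have h := hρ.dist_le_mul s 0
      rwa [Real.dist_eq, Real.dist_eq, hρ₀, sub_zero, sub_zero, abs_of_pos hs.1] at h
    have hsub : Ioo (leftEnd S u) u ⊆ S ∩ uIcc z u := fun x hx =>
      ⟨Ioo_leftEnd_rightEnd_subset u ⟨hx.1, hx.2.trans (lt_rightEnd hS hSo hu)⟩,
        Icc_subset_uIcc ⟨(le_leftEnd hz hzu).trans hx.1.le, hx.2.le⟩⟩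
    have hvol := sub_le_measureReal_of_Ioo_subset hfin hsub (leftEnd_le hS u)
    calc |onComponents S k ρ u| ≤ L * (K * s) := hbound.trans (by gcongr)
      _ = K * (u - leftEnd S u) := by rw [← hLs]; ring
      _ ≤ K * volume.real (S ∩ uIcc z u) := by gcongr
  · have hρs : |ρ s| ≤ K * (1 - s) := by
      have h := hρ.dist_le_mul s 1
      rwa [Real.dist_eq, Real.dist_eq, hρ₁, sub_zero, abs_sub_comm s,
        abs_of_pos (sub_pos.2 hs.2)] at h
    have hsub : Ioo u (rightEnd S u) ⊆ S ∩ uIcc z u := fun x hx =>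
      ⟨Ioo_leftEnd_rightEnd_subset u ⟨(leftEnd_lt hS hSo hu).trans hx.1, hx.2⟩,
        Icc_subset_uIcc' ⟨hx.1.le, hx.2.le.trans (rightEnd_le hz huz)⟩⟩
    have hvol := sub_le_measureReal_of_Ioo_subset hfin hsub (le_rightEnd hS u)
    calc |onComponents S k ρ u| ≤ L * (K * (1 - s)) := hbound.trans (by gcongr)
      _ = K * (rightEnd S u - u) := by
          rw [mul_left_comm, mul_one_sub, hLs]; simp only [L, compLength]; ring
      _ ≤ K * volume.real (S ∩ uIcc z u) := by gcongr

lemma abs_onComponents_sub_le_of_Icc_subset {K : ℝ≥0} (hρ : LipschitzWith K ρ) (hk : k ≠ 0)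
    {x y : ℝ} (hxy : x ≤ y) (hsub : Icc x y ⊆ S) :
    |onComponents S k ρ x - onComponents S k ρ y| ≤ K * (y - x) := by
  have hx : x ∈ S := hsub ⟨le_rfl, hxy⟩
  have hyr : y < rightEnd S x := lt_of_not_ge fun h =>
    rightEnd_notMem hS hSo x (hsub ⟨le_rightEnd hS x, h⟩)
  rw [onComponents_of_mem_Ioo hS hSo ⟨leftEnd_lt hS hSo hx, lt_rightEnd hS hSo hx⟩,
    onComponents_of_mem_Ioo hS hSo ⟨(leftEnd_lt hS hSo hx).trans_le hxy, hyr⟩, ← mul_sub]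
  set L := compLength S x
  have hL : 0 < L := compLength_pos hS hSo hx
  have hLk : L ^ k ≤ L := pow_le_of_le_one hL.le (compLength_le_one hS hx) hk
  have hρxy := hρ.dist_le_mul ((x - leftEnd S x) / L) ((y - leftEnd S x) / L)
  rw [Real.dist_eq, Real.dist_eq, ← sub_div, sub_sub_sub_cancel_right, abs_div, abs_of_pos hL,
    abs_sub_comm x y, abs_of_nonneg (sub_nonneg.2 hxy)] at hρxy
  rw [abs_mul, abs_of_pos (pow_pos hL k)]
  calc L ^ k * |ρ ((x - leftEnd S x) / L) - ρ ((y - leftEnd S x) / L)|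
      ≤ L * (K * ((y - x) / L)) := mul_le_mul hLk hρxy (abs_nonneg _) hL.le
    _ = K * (y - x) := by field_simp

lemma lipschitzWith_onComponents {K : ℝ≥0} (hρ : LipschitzWith K ρ) (hρ₀ : ρ 0 = 0)
    (hρ₁ : ρ 1 = 0) (hk : k ≠ 0) : LipschitzWith K (onComponents S k ρ) := by
  have key : ∀ x y, x ≤ y → |onComponents S k ρ x - onComponents S k ρ y| ≤ K * (y - x) := by
    intro x y hxy
    by_cases hsub : Icc x y ⊆ S
    · exact abs_onComponents_sub_le_of_Icc_subset hS hSo hρ hk hxy hsub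
    obtain ⟨z, ⟨hxz, hzy⟩, hz⟩ := not_subset.1 hsub
    have hx := (abs_onComponents_le_measureReal hS hSo hρ hρ₀ hρ₁ hk hz x).trans
      (mul_le_mul_of_nonneg_left (measureReal_inter_uIcc_le S z x) K.2)
    have hy := (abs_onComponents_le_measureReal hS hSo hρ hρ₀ hρ₁ hk hz y).trans
      (mul_le_mul_of_nonneg_left (measureReal_inter_uIcc_le S z y) K.2)
    rw [abs_of_nonpos (sub_nonpos.2 hxz)] at hx
    rw [abs_of_nonneg (sub_nonneg.2 hzy)] at hy
    calc |onComponents S k ρ x - onComponents S k ρ y|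
        ≤ |onComponents S k ρ x| + |onComponents S k ρ y| := abs_sub _ _
      _ ≤ K * (y - x) := by linarith
  refine LipschitzWith.of_dist_le_mul fun x y => ?_
  rw [Real.dist_eq, Real.dist_eq]
  rcases le_total x y with hxy | hyx
  · rw [abs_of_nonpos (sub_nonpos.2 hxy), neg_sub]; exact key x y hxy
  · rw [abs_sub_comm, abs_of_nonneg (sub_nonneg.2 hyx)]; exact key y x hyx

lemma onComponents_eventuallyEq (ht : t ∈ S) :
    onComponents S k ρ =ᶠ[𝓝 t]
      fun u => compLength S t ^ k * ρ ((u - leftEnd S t) / compLength S t) :=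
  eventually_of_mem (Ioo_mem_nhds (leftEnd_lt hS hSo ht) (lt_rightEnd hS hSo ht))
    fun _ hu => onComponents_of_mem_Ioo hS hSo hu

lemma hasDerivAt_onComponents {d : ℝ} (ht : t ∈ S) (hρ : HasDerivAt ρ d (relPos S t)) :
    HasDerivAt (onComponents S k ρ) (compLength S t ^ k * d / compLength S t) t := by
  have h := (hρ.comp_of_eq t (((hasDerivAt_id' t).sub_const (leftEnd S t)).div_const
    (compLength S t)) rfl).const_mul (compLength S t ^ k)
  rw [mul_one_div, ← mul_div_assoc] at h
  exact h.congr_of_eventuallyEq (onComponents_eventuallyEq hS hSo ht)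

lemma continuousAt_onComponents (ht : t ∈ S) (hρ : ContinuousAt ρ (relPos S t)) :
    ContinuousAt (onComponents S k ρ) t := by
  have h : ContinuousAt (fun u => (u - leftEnd S t) / compLength S t) t :=
    (continuousAt_id.sub continuousAt_const).div_const _
  exact ((hρ.comp_of_eq h rfl).const_mul _).congr (onComponents_eventuallyEq hS hSo ht).symm

lemma measurable_onComponents (hρ : Measurable ρ) : Measurable (onComponents S k ρ) := by
  refine Measurable.ite hSo.measurableSet ?_ measurable_const
  exact (((monotone_rightEnd hS).measurable.sub (monotone_leftEnd hS).measurable).pow_const k).mul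
    (hρ.comp (measurable_relPos hS))

lemma abs_onComponents_le {M : ℝ} (hρ : ∀ s, |ρ s| ≤ M) (t : ℝ) : |onComponents S k ρ t| ≤ M := by
  by_cases ht : t ∈ S
  · have hL := compLength_pos hS hSo ht
    rw [onComponents, if_pos ht, abs_mul, abs_of_pos (pow_pos hL k)]
    calc compLength S t ^ k * |ρ (relPos S t)| ≤ 1 * M :=
          mul_le_mul (pow_le_one₀ hL.le (compLength_le_one hS ht)) (hρ _) (abs_nonneg _)
            zero_le_one
      _ = M := one_mul M
  · rw [onComponents_of_notMem ht, abs_zero]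
    exact (abs_nonneg _).trans (hρ 0)

lemma onComponents_nonpos (hρ : ∀ s, ρ s ≤ 0) (t : ℝ) : onComponents S k ρ t ≤ 0 := by
  by_cases ht : t ∈ S
  · rw [onComponents, if_pos ht]
    exact mul_nonpos_of_nonneg_of_nonpos (pow_nonneg (compLength_pos hS hSo ht).le k) (hρ _)
  · rw [onComponents_of_notMem ht]

lemma hasDerivAt_onComponents_of_notMem {K : ℝ≥0} (hρ : LipschitzWith K ρ) (hρ₀ : ρ 0 = 0)
    (hρ₁ : ρ 1 = 0) (hk : k ≠ 0) (ht : t ∉ S) (hd : DensityZeroAt S t) :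
    HasDerivAt (onComponents S k ρ) 0 t :=
  hasDerivAt_of_norm_sub_le_measureReal hd fun u => by
    simpa [onComponents_of_notMem ht] using
      abs_onComponents_le_measureReal hS hSo hρ hρ₀ hρ₁ hk ht u

end OnComponents

lemma hasDerivAt_toLp_vecCons {f₀ f₁ f₂ f₃ : ℝ → ℝ} {a₀ a₁ a₂ a₃ t : ℝ}
    (h₀ : HasDerivAt f₀ a₀ t) (h₁ : HasDerivAt f₁ a₁ t) (h₂ : HasDerivAt f₂ a₂ t)
    (h₃ : HasDerivAt f₃ a₃ t) :
    HasDerivAt (fun t => (WithLp.toLp 2 ![f₀ t, f₁ t, f₂ t, f₃ t] : EuclideanSpace ℝ (Fin 4)))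
      (WithLp.toLp 2 ![a₀, a₁, a₂, a₃]) t := by
  have h : HasDerivAt (fun t => ![f₀ t, f₁ t, f₂ t, f₃ t]) ![a₀, a₁, a₂, a₃] t :=
    hasDerivAt_pi.2 fun i => by fin_cases i <;> assumption
  exact (PiLp.hasFDerivAt_toLp 2 _).comp_hasDerivAt t h

lemma lipschitzWith_toLp_vecCons {f₀ f₁ f₂ f₃ : ℝ → ℝ} {K : ℝ≥0} (h₀ : LipschitzWith K f₀)
    (h₁ : LipschitzWith K f₁) (h₂ : LipschitzWith K f₂) (h₃ : LipschitzWith K f₃) :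
    ∃ K', LipschitzWith K'
      (fun t => (WithLp.toLp 2 ![f₀ t, f₁ t, f₂ t, f₃ t] : EuclideanSpace ℝ (Fin 4))) := by
  have h : LipschitzWith K fun t => ![f₀ t, f₁ t, f₂ t, f₃ t] :=
    LipschitzWith.of_dist_le_mul fun x y => (dist_pi_le_iff (by positivity)).2 fun i => by
      fin_cases i
      exacts [h₀.dist_le_mul x y, h₁.dist_le_mul x y, h₂.dist_le_mul x y, h₃.dist_le_mul x y]
  exact ⟨_, (PiLp.lipschitzWith_toLp 2 _).comp h⟩

def engelW (S : Set ℝ) (t : ℝ) : ℝ := ∫ u in 0..t, onComponents S 2 loopVelW u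

/-- On a component `(P, P + L)` of `S` the second coordinate is `P + L * loopY ((t - P) / L)`. -/
def engelCurve (S : Set ℝ) (t : ℝ) : EuclideanSpace ℝ (Fin 4) :=
  WithLp.toLp 2 ![onComponents S 1 loopX t, t + onComponents S 1 (fun s => loopY s - s) t,
    onComponents S 2 loopZ t, engelW S t]

section EngelCurve

variable {S : Set ℝ} {t : ℝ} (hS : S ⊆ Ioo 0 1) (hSo : IsOpen S)
include hS hSo

lemma intervalIntegrable_onComponents_loopVelW (a b : ℝ) :
    IntervalIntegrable (onComponents S 2 loopVelW) volume a b :=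
  intervalIntegrable_iff.2 <| Measure.integrableOn_of_bounded measure_Ioc_lt_top.ne
    (measurable_onComponents hS hSo measurable_loopVelW).aestronglyMeasurable
    (ae_of_all _ fun x => (Real.norm_eq_abs _).trans_le
      (abs_onComponents_le hS hSo abs_loopVelW_le x))

lemma engelW_sub (t u : ℝ) :
    engelW S u - engelW S t = ∫ x in t..u, onComponents S 2 loopVelW x :=
  intervalIntegral.integral_interval_sub_left (intervalIntegrable_onComponents_loopVelW hS hSo 0 u)
    (intervalIntegrable_onComponents_loopVelW hS hSo 0 t)

lemma abs_engelW_sub_le (t u : ℝ) :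
    |engelW S u - engelW S t| ≤ 6 * volume.real (S ∩ uIcc t u) := by
  rw [engelW_sub hS hSo, ← Real.norm_eq_abs]
  exact norm_intervalIntegral_le_measureReal hSo.measurableSet
    (fun x => (Real.norm_eq_abs _).trans_le (abs_onComponents_le hS hSo abs_loopVelW_le x))
    (fun _ hx => onComponents_of_notMem hx) t u

lemma lipschitzWith_engelW : LipschitzWith 6 (engelW S) :=
  LipschitzWith.of_dist_le_mul fun x y => by
    rw [Real.dist_eq, Real.dist_eq]
    exact (abs_engelW_sub_le hS hSo y x).trans
      (mul_le_mul_of_nonneg_left (measureReal_inter_uIcc_le S y x) (by norm_num))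

lemma antitone_engelW : Antitone (engelW S) := fun u v huv => by
  have h := intervalIntegral.integral_mono_on huv
    (intervalIntegrable_onComponents_loopVelW hS hSo u v) intervalIntegrable_const
    fun x _ => onComponents_nonpos hS hSo loopVelW_nonpos x
  rw [intervalIntegral.integral_const, smul_zero, ← engelW_sub hS hSo] at h
  linarith

lemma engelW_lt_of_mem {a b x : ℝ} (hx : x ∈ S) (ha : a ≤ leftEnd S x) (hb : rightEnd S x ≤ b) :
    engelW S b < engelW S a := by
  set P := leftEnd S x
  set L := compLength S x
  have hL : 0 < L := compLength_pos hS hSo hx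
  have hQ : rightEnd S x = P + L := by simp only [P, L, compLength]; ring
  have hconst : EqOn (onComponents S 2 loopVelW) (fun _ => -3 * L ^ 2)
      (uIcc (P + L / 6) (P + L / 3)) := by
    intro y hy
    rw [uIcc_of_le (by linarith)] at hy
    rw [onComponents_of_mem_Ioo hS hSo ⟨by linarith [hy.1], by linarith [hy.2]⟩,
      loopVelW_eqOn ⟨(le_div_iff₀ hL).2 (by linarith [hy.1]),
        (div_le_iff₀ hL).2 (by linarith [hy.2])⟩]
    ring
  have hdrop : engelW S (P + L / 3) - engelW S (P + L / 6) = -(L ^ 3 / 2) := by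
    rw [engelW_sub hS hSo, intervalIntegral.integral_congr hconst, intervalIntegral.integral_const,
      smul_eq_mul]
    ring
  calc engelW S b ≤ engelW S (P + L / 3) := antitone_engelW hS hSo (by linarith)
    _ < engelW S (P + L / 6) := by linarith [pow_pos hL 3]
    _ ≤ engelW S a := antitone_engelW hS hSo (by linarith)

lemma hasDerivAt_engelW_of_mem (ht : t ∈ S) (hW : ContinuousAt loopVelW (relPos S t)) :
    HasDerivAt (engelW S) (onComponents S 2 loopVelW t) t :=
  intervalIntegral.integral_hasDerivAt_right (intervalIntegrable_onComponents_loopVelW hS hSo 0 t)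
    ((measurable_onComponents hS hSo measurable_loopVelW).aestronglyMeasurable
      |>.stronglyMeasurableAtFilter)
    (continuousAt_onComponents hS hSo ht hW)

lemma lipschitzWith_engelCurve : ∃ K, LipschitzWith K (engelCurve S) :=
  lipschitzWith_toLp_vecCons (K := 32)
    ((lipschitzWith_onComponents hS hSo lipschitzWith_loopX loopX_zero loopX_one one_ne_zero).weaken
      (by norm_num))
    ((LipschitzWith.id.add (lipschitzWith_onComponents hS hSo lipschitzWith_loopY_sub_id
      (by simp [loopY_zero]) (by simp [loopY_one]) one_ne_zero)).weaken (by norm_num))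
    ((lipschitzWith_onComponents hS hSo lipschitzWith_loopZ loopZ_zero loopZ_one two_ne_zero).weaken
      (by norm_num))
    ((lipschitzWith_engelW hS hSo).weaken (by norm_num))

lemma hasDerivAt_engelCurve_of_notMem (ht : t ∉ S) (hd : DensityZeroAt S t) :
    HasDerivAt (engelCurve S) e₂ t := by
  have hW : HasDerivAt (engelW S) 0 t := hasDerivAt_of_norm_sub_le_measureReal hd fun u => by
    simpa using abs_engelW_sub_le hS hSo t u
  have he₂ : e₂ = WithLp.toLp 2 ![0, 1 + 0, 0, 0] := by
    ext i
    fin_cases i <;> simp [e₂]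
  rw [he₂]
  exact hasDerivAt_toLp_vecCons
    (hasDerivAt_onComponents_of_notMem hS hSo lipschitzWith_loopX loopX_zero loopX_one
      one_ne_zero ht hd)
    ((hasDerivAt_id' t).add (hasDerivAt_onComponents_of_notMem hS hSo lipschitzWith_loopY_sub_id
      (by simp [loopY_zero]) (by simp [loopY_one]) one_ne_zero ht hd))
    (hasDerivAt_onComponents_of_notMem hS hSo lipschitzWith_loopZ loopZ_zero loopZ_one
      two_ne_zero ht hd) hW

lemma exists_hasDerivAt_engelCurve_of_mem (ht : t ∈ S) (hs : relPos S t ∉ loopBreaks) :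
    ∃ v, HasDerivAt (engelCurve S) v t ∧ EngelHoriz (engelCurve S t) v := by
  obtain ⟨hX, hY, hZ, hW⟩ := hasDerivAt_loop hs
  refine ⟨_, hasDerivAt_toLp_vecCons (hasDerivAt_onComponents hS hSo ht hX)
    ((hasDerivAt_id' t).add (hasDerivAt_onComponents hS hSo ht (hY.sub (hasDerivAt_id' _))))
    (hasDerivAt_onComponents hS hSo ht hZ) (hasDerivAt_engelW_of_mem hS hSo ht hW), ?_⟩
  have hL := (compLength_pos hS hSo ht).ne'
  simp only [EngelHoriz, engelCurve, PiLp.toLp_apply, Matrix.cons_val, onComponents, if_pos ht,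
    ← loopVelY_mul_loopX_sq]
  constructor <;> field_simp <;> ring

end EngelCurve

lemma countable_setOf_relPos_mem {S : Set ℝ} (hS : S ⊆ Ioo 0 1) (hSo : IsOpen S) {B : Set ℝ}
    (hB : B.Countable) : {t | t ∈ S ∧ relPos S t ∈ B}.Countable := by
  -- a point of `S` is determined by a rational number in its component and its relative position
  refine (countable_iUnion fun q : ℚ =>
    hB.image fun b => leftEnd S q + b * compLength S q).mono ?_
  rintro t ⟨ht, htB⟩
  obtain ⟨q, hq₁, hq₂⟩ := exists_rat_btwn ((leftEnd_lt hS hSo ht).trans (lt_rightEnd hS hSo ht))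
  have hq : (q : ℝ) ∈ Ioo (leftEnd S t) (rightEnd S t) := ⟨hq₁, hq₂⟩
  refine mem_iUnion.2 ⟨q, relPos S t, htB, ?_⟩
  have hL := (compLength_pos hS hSo ht).ne'
  rw [compLength, leftEnd_eq_of_mem_Ioo hS hSo hq, rightEnd_eq_of_mem_Ioo hS hSo hq, relPos]
  rw [compLength] at hL ⊢
  field_simp
  ring

section AlmostEverywhere

variable {S : Set ℝ} (hS : S ⊆ Ioo 0 1) (hSo : IsOpen S)
include hS hSo

lemma ae_hasDerivAt_engelCurve_of_notMem : ∀ᵐ t, t ∉ S → HasDerivAt (engelCurve S) e₂ t := by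
  filter_upwards [Besicovitch.ae_tendsto_measure_inter_div_of_measurableSet volume
    hSo.measurableSet] with t hd ht
  exact hasDerivAt_engelCurve_of_notMem hS hSo ht (by simpa [DensityZeroAt, ht] using hd)

lemma ae_exists_hasDerivAt_engelHoriz :
    ∀ᵐ t, ∃ v, HasDerivAt (engelCurve S) v t ∧ EngelHoriz (engelCurve S t) v := by
  have hgood : ∀ᵐ t, t ∉ {t | t ∈ S ∧ relPos S t ∈ loopBreaks} :=
    measure_eq_zero_iff_ae_notMem.1
      ((countable_setOf_relPos_mem hS hSo (by simp [loopBreaks])).measure_zero volume)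
  filter_upwards [ae_hasDerivAt_engelCurve_of_notMem hS hSo, hgood] with t hoff hgood
  by_cases ht : t ∈ S
  · exact exists_hasDerivAt_engelCurve_of_mem hS hSo ht fun h => hgood ⟨ht, h⟩
  · refine ⟨e₂, hoff ht, ?_⟩
    simp [EngelHoriz, e₂, engelCurve, onComponents_of_notMem ht]

end AlmostEverywhere

lemma exists_isOpen_subset_volume_lt_subset_closure {U : Set ℝ} (hU : IsOpen U) {ε : ℝ}
    (hε : 0 < ε) : ∃ S ⊆ U, IsOpen S ∧ volume S < ENNReal.ofReal ε ∧ U ⊆ closure S := by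
  obtain ⟨V, hQV, hVo, hV⟩ := exists_isOpen_lt_of_lt (range ((↑) : ℚ → ℝ)) (ENNReal.ofReal ε)
    (by rw [(countable_range _).measure_zero volume]; exact ENNReal.ofReal_pos.2 hε)
  exact ⟨V ∩ U, inter_subset_right, hVo.inter hU, (measure_mono inter_subset_left).trans_lt hV,
    (Rat.denseRange_cast.open_subset_closure_inter hU).trans
      (closure_mono fun x hx => ⟨hQV hx.2, hx.1⟩)⟩

end
end BadEngel

open BadEngel

theorem bad_engel_curve (ε : ℝ) (hε : 0 < ε) :
    ∃ (S : Set ℝ) (γ : ℝ → EuclideanSpace ℝ (Fin 4)),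
      IsOpen S ∧ S ⊆ Set.Ioo 0 1 ∧ volume S < ENNReal.ofReal ε ∧
      Set.Ioo (0:ℝ) 1 ⊆ closure S ∧
      (∃ K : NNReal, LipschitzOnWith K γ (Set.Icc 0 1)) ∧
      (∃ g : ℝ → EuclideanSpace ℝ (Fin 4),
        ∀ᵐ t ∂(volume.restrict (Set.Ioo (0:ℝ) 1)),
          HasDerivAt γ (g t) t ∧ EngelHoriz (γ t) (g t)) ∧
      (∀ᵐ t ∂(volume.restrict (Set.Ioo (0:ℝ) 1 \ S)), HasDerivAt γ e₂ t) ∧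
      (∀ a ∈ Set.Ioo (0:ℝ) 1 \ S, ∀ b ∈ Set.Ioo (0:ℝ) 1 \ S,
        a < b → γ b 3 < γ a 3) := by
  obtain ⟨S, hS, hSo, hvol, hdense⟩ := exists_isOpen_subset_volume_lt_subset_closure isOpen_Ioo hε
  obtain ⟨K, hK⟩ := lipschitzWith_engelCurve hS hSo
  refine ⟨S, engelCurve S, hSo, hS, hvol, hdense, ⟨K, hK.lipschitzOnWith⟩,
    ⟨deriv (engelCurve S), ae_restrict_of_ae ?_⟩, ?_, ?_⟩
  · filter_upwards [ae_exists_hasDerivAt_engelHoriz hS hSo] with t ⟨v, hv, hH⟩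
    rw [hv.deriv]
    exact ⟨hv, hH⟩
  · exact (ae_restrict_iff' (measurableSet_Ioo.diff hSo.measurableSet)).2
      ((ae_hasDerivAt_engelCurve_of_notMem hS hSo).mono fun t h ht => h ht.2)
  · rintro a ⟨ha, haS⟩ b ⟨hb, hbS⟩ hab
    obtain ⟨x, hx, hxab⟩ : (S ∩ Ioo a b).Nonempty := (closure_inter_open_nonempty_iff isOpen_Ioo).1
      ⟨(a + b) / 2, hdense ⟨by linarith [ha.1], by linarith [hb.2]⟩, by linarith, by linarith⟩
    exact engelW_lt_of_mem hS hSo hx (le_leftEnd haS hxab.1.le) (rightEnd_le hbS hxab.2.le)
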